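/- arXiv:2006.08465 — 5 statements merged into one kernel-verified Lean document; each statement's English description precedes it below -/
import Mathlib

section
/- Let X ⊆ ℝⁿ, let f : ℝⁿ → ℝⁿ be continuous (the closed-loop vector field), let X₀ ⊆ X be the initial set and X_u ⊆ X the unsafe set. Suppose B : ℝⁿ → ℝ is continuously differentiable and there is an extended class-K function β such that: (i) B(x) ≤ 0 for all x ∈ X₀; (ii) B(x) > 0 for all x ∈ X_u; (iii) ⟨∇B(x), f(x)⟩ ≤ −β(B(x)) for all x ∈ X. Then for every differentiable curve x : [0,∞) → ℝⁿ with x'(t) = f(x(t)) and x(t) ∈ X for all t ≥ 0 and x(0) ∈ X₀, one has x(T) ∉ X_u for every T ≥ 0. -/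
/-!
Along a trajectory the barrier value `g t = B (x t)` satisfies `g' ≤ -β (g)`, so `g` is
nonincreasing wherever it is positive. Were `x T` unsafe, `g T > 0`; on the interval from the
last time `s ≤ T` with `g s ≤ 0` up to `T` the function `g` is positive, hence nonincreasing,
giving `0 < g T ≤ g s ≤ 0`.
-/

open scoped RealInnerProductSpace

open Set

/-- An extended class-K function: a strictly increasing continuous function
`β : ℝ → ℝ` with `β 0 = 0`. -/
def ExtendedClassK (β : ℝ → ℝ) : Prop :=
  Continuous β ∧ StrictMono β ∧ β 0 = 0

theorem ExtendedClassK.nonneg {β : ℝ → ℝ} (hβ : ExtendedClassK β) {r : ℝ} (hr : 0 ≤ r) :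
    0 ≤ β r :=
  hβ.2.2 ▸ hβ.2.1.monotone hr

theorem HasGradientAt.hasDerivAt_comp {F : Type*} [NormedAddCommGroup F]
    [InnerProductSpace ℝ F] [CompleteSpace F] {B : F → ℝ} {x : ℝ → F} {b x' : F} {t : ℝ}
    (hB : HasGradientAt B b (x t)) (hx : HasDerivAt x x' t) :
    HasDerivAt (fun s => B (x s)) ⟪b, x'⟫ t :=
  hB.hasFDerivAt.comp_hasDerivAt t hx

theorem nonpos_of_deriv_nonpos_of_pos {g g' : ℝ → ℝ} {a b : ℝ} (hab : a ≤ b)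
    (hg : ContinuousOn g (Icc a b)) (hg' : ∀ t ∈ Ioo a b, HasDerivAt g (g' t) t)
    (hpos : ∀ t ∈ Ioo a b, 0 < g t → g' t ≤ 0) (ha : g a ≤ 0) : g b ≤ 0 := by
  by_contra! hb
  set S := Icc a b ∩ {t | g t ≤ 0}
  have hS_closed : IsClosed S := hg.preimage_isClosed_of_isClosed isClosed_Icc isClosed_Iic
  have hS_bdd : BddAbove S := ⟨b, fun t ht => ht.1.2⟩
  obtain ⟨⟨has, hsb⟩, hgs⟩ : sSup S ∈ S := hS_closed.csSup_mem ⟨a, ⟨le_rfl, hab⟩, ha⟩ hS_bdd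
  set s := sSup S
  have hsb' : s < b := hsb.lt_of_ne fun h => hb.not_ge (h ▸ hgs)
  have hpos_after : ∀ t ∈ Ioo s b, 0 < g t := fun t ht => by
    by_contra! h
    exact ht.1.not_ge (le_csSup hS_bdd ⟨⟨has.trans ht.1.le, ht.2.le⟩, h⟩)
  have hderiv : ∀ t ∈ Ioo s b, HasDerivAt g (g' t) t := fun t ht =>
    hg' t ⟨has.trans_lt ht.1, ht.2⟩
  have hanti : AntitoneOn g (Icc s b) := by
    refine antitoneOn_of_deriv_nonpos (convex_Icc s b) (hg.mono (Icc_subset_Icc has le_rfl))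
      ?_ ?_ <;> rw [interior_Icc]
    · exact fun t ht => (hderiv t ht).differentiableAt.differentiableWithinAt
    · intro t ht
      rw [(hderiv t ht).deriv]
      exact hpos t ⟨has.trans_lt ht.1, ht.2⟩ (hpos_after t ht)
  exact hb.not_ge ((hanti ⟨le_rfl, hsb'.le⟩ ⟨hsb'.le, le_rfl⟩ hsb'.le).trans hgs)

theorem safe_control_theorem_general {n : ℕ}
    (X X0 Xu : Set (EuclideanSpace ℝ (Fin n)))
    (f : EuclideanSpace ℝ (Fin n) → EuclideanSpace ℝ (Fin n))
    (B : EuclideanSpace ℝ (Fin n) → ℝ) (hB : ContDiff ℝ 1 B)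
    (β : ℝ → ℝ) (hβ : ExtendedClassK β)
    (hinit : ∀ x ∈ X0, B x ≤ 0)
    (hunsafe : ∀ x ∈ Xu, 0 < B x)
    (hdecr : ∀ x ∈ X, ⟪gradient B x, f x⟫ ≤ -β (B x)) :
    ∀ x : ℝ → EuclideanSpace ℝ (Fin n),
      (∀ t : ℝ, 0 ≤ t → HasDerivAt x (f (x t)) t) →
      (∀ t : ℝ, 0 ≤ t → x t ∈ X) →
      x 0 ∈ X0 →
      ∀ T : ℝ, 0 ≤ T → x T ∉ Xu := by
  intro x hx hxX hx0 T hT hTu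
  have hBx : ∀ t, 0 ≤ t → HasDerivAt (fun s => B (x s)) ⟪gradient B (x t), f (x t)⟫ t :=
    fun t ht => ((hB.differentiable one_ne_zero _).hasGradientAt).hasDerivAt_comp (hx t ht)
  have hsafe : B (x T) ≤ 0 :=
    nonpos_of_deriv_nonpos_of_pos hT
      (fun t ht => (hBx t ht.1).continuousAt.continuousWithinAt) (fun t ht => hBx t ht.1.le)
      (fun t ht hpos => (hdecr _ (hxX t ht.1.le)).trans (neg_nonpos.2 (hβ.nonneg hpos.le)))
      (hinit _ hx0)
  exact (hunsafe _ hTu).not_ge hsafe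

/-- **Safe control theorem (Lemma 1).** If `B` is a barrier function for the
closed-loop system `ẋ = f(x)` on `X` with initial set `X₀` and unsafe set `Xu`,
then every trajectory starting in `X₀` and staying in `X` never enters `Xu`. -/
theorem safe_control_theorem {n : ℕ}
    (X X0 Xu : Set (EuclideanSpace ℝ (Fin n)))
    (f : EuclideanSpace ℝ (Fin n) → EuclideanSpace ℝ (Fin n))
    (hf : Continuous f) (hX0 : X0 ⊆ X) (hXu : Xu ⊆ X)
    (B : EuclideanSpace ℝ (Fin n) → ℝ) (hB : ContDiff ℝ 1 B)
    (β : ℝ → ℝ) (hβ : ExtendedClassK β)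
    (hinit : ∀ x ∈ X0, B x ≤ 0)
    (hunsafe : ∀ x ∈ Xu, 0 < B x)
    (hdecr : ∀ x ∈ X, ⟪gradient B x, f x⟫ ≤ -β (B x)) :
    ∀ x : ℝ → EuclideanSpace ℝ (Fin n),
      (∀ t : ℝ, 0 ≤ t → HasDerivAt x (f (x t)) t) →
      (∀ t : ℝ, 0 ≤ t → x t ∈ X) →
      x 0 ∈ X0 →
      ∀ T : ℝ, 0 ≤ T → x T ∉ Xu :=
  safe_control_theorem_general X X0 Xu f B hB β hβ hinit hunsafe hdecr
end

section
/- Let β : ℝ → ℝ be strictly increasing with β(0) = 0, and let h : [0,∞) → ℝ be differentiable with h'(t) ≤ −β(h(t)) for all t ≥ 0. If h(0) ≤ 0, then h(t) ≤ 0 for all t ≥ 0. -/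
/-! Wherever `h` is positive, `h' ≤ -β h < -β 0 = 0`, so `h` can never climb above `0`.
This is a fencing argument: a function whose right derivative is at most `B'` wherever it
exceeds `B` stays below `B`. -/

open Set

/- Fencing by `B + ε (1 + (x - a))`: where `f` touches this barrier it lies strictly above `B`,
so its right derivative is at most `B'`, strictly below the barrier's `B' + ε`. -/
theorem image_le_of_deriv_right_le_deriv_of_lt {f f' B B' : ℝ → ℝ} {a b : ℝ}
    (hf : ContinuousOn f (Icc a b)) (hf' : ∀ x ∈ Ico a b, HasDerivWithinAt f (f' x) (Ici x) x)
    (ha : f a ≤ B a) (hB : ContinuousOn B (Icc a b))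
    (hB' : ∀ x ∈ Ico a b, HasDerivWithinAt B (B' x) (Ici x) x)
    (bound : ∀ x ∈ Ico a b, B x < f x → f' x ≤ B' x) :
    ∀ ⦃x⦄, x ∈ Icc a b → f x ≤ B x := by
  intro x hx
  have hfence : ∀ ε > 0, f x ≤ B x + ε * (1 + (x - a)) := by
    intro ε hε
    have hlin : ∀ y, HasDerivAt (fun y => ε * (1 + (y - a))) ε y := fun y => by
      simpa using (((hasDerivAt_id y).sub_const a).const_add 1).const_mul ε
    refine image_le_of_deriv_right_lt_deriv_boundary' (B := fun y => B y + ε * (1 + (y - a)))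
      hf hf' (by simp only [sub_self, add_zero, mul_one]; linarith)
      (hB.add (by fun_prop : Continuous fun y => ε * (1 + (y - a))).continuousOn)
      (fun y hy => (hB' y hy).add (hlin y).hasDerivWithinAt) (fun y hy hfy => ?_) hx
    have : B y < f y := by rw [hfy]; nlinarith [hy.1]
    linarith [bound y hy this]
  have hlen : 0 < 1 + (x - a) := by linarith [hx.1]
  refine le_of_forall_pos_le_add fun ε hε => ?_
  simpa [div_mul_cancel₀ _ hlen.ne'] using hfence (ε / (1 + (x - a))) (by positivity)

/-- **Scalar comparison lemma.** If `β : ℝ → ℝ` is strictly increasing with `β 0 = 0`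
and `h : [0,∞) → ℝ` is differentiable with `h'(t) ≤ -β (h t)` for all `t ≥ 0`, then
`h 0 ≤ 0` implies `h t ≤ 0` for all `t ≥ 0`. -/
theorem scalar_comparison_nonpos_invariant
    (β : ℝ → ℝ) (hβ : StrictMono β) (hβ0 : β 0 = 0)
    (h h' : ℝ → ℝ)
    (hderiv : ∀ t : ℝ, 0 ≤ t → HasDerivAt h (h' t) t)
    (hineq : ∀ t : ℝ, 0 ≤ t → h' t ≤ -β (h t))
    (h0 : h 0 ≤ 0) :
    ∀ t : ℝ, 0 ≤ t → h t ≤ 0 := by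
  intro t ht
  have hdecr : ∀ u, 0 ≤ u → 0 < h u → h' u ≤ 0 := fun u hu hpos => by
    have hβpos : β 0 < β (h u) := hβ hpos
    linarith [hineq u hu]
  exact image_le_of_deriv_right_le_deriv_of_lt
    (fun u hu => (hderiv u hu.1).continuousAt.continuousWithinAt)
    (fun u hu => (hderiv u hu.1).hasDerivWithinAt) h0 continuousOn_const
    (fun u _ => hasDerivWithinAt_const u _ 0) (fun u hu hpos => hdecr u hu.1 hpos)
    (right_mem_Icc.2 ht)
end

section
/- Let X ⊆ ℝⁿ, let f : ℝⁿ → ℝⁿ be continuous, let B : ℝⁿ → ℝ be continuously differentiable, and let β be an extended class-K function with ⟨∇B(x), f(x)⟩ ≤ −β(B(x)) for all x ∈ X. Then for every differentiable curve x : [0,∞) → ℝⁿ with x'(t) = f(x(t)) and x(t) ∈ X for all t ≥ 0 and B(x(0)) ≤ 0, one has B(x(t)) ≤ 0 for all t ≥ 0. -/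
/-!
Along a trajectory, `t ↦ B (x t)` has derivative `⟪∇B, f⟫ ≤ -β (B)`, which is nonpositive wherever
`B > 0` because `β` is increasing with `β 0 = 0`. A scalar function that starts at a nonpositive
value and cannot increase while positive stays nonpositive.
-/

open scoped RealInnerProductSpace

open Set

theorem ExtendedClassK.pos {β : ℝ → ℝ} (hβ : ExtendedClassK β) {r : ℝ} (hr : 0 < r) :
    0 < β r :=
  hβ.2.2 ▸ hβ.2.1 hr

theorem HasGradientAt.comp_hasDerivAt {F : Type*} [NormedAddCommGroup F]
    [InnerProductSpace ℝ F] [CompleteSpace F] {B : F → ℝ} {g : F} {γ : ℝ → F} {v : F} {t : ℝ}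
    (hB : HasGradientAt B g (γ t)) (hγ : HasDerivAt γ v t) :
    HasDerivAt (B ∘ γ) ⟪g, v⟫ t := by
  simpa using hB.hasFDerivAt.comp_hasDerivAt t hγ

theorem image_nonpos_of_deriv_right_nonpos_of_pos {g g' : ℝ → ℝ} {a b : ℝ}
    (hg : ContinuousOn g (Icc a b)) (hg' : ∀ s ∈ Ico a b, HasDerivWithinAt g (g' s) (Ici s) s)
    (ha : g a ≤ 0) (hbound : ∀ s ∈ Ico a b, 0 < g s → g' s ≤ 0) :
    ∀ ⦃t⦄, t ∈ Icc a b → g t ≤ 0 := by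
  intro t ht
  -- the fences `ε (1 + (s - a))` are positive, so `g` can only touch them where `g > 0`
  have hfence : ∀ ε > 0, g t ≤ ε * (1 + (t - a)) := fun ε hε =>
    image_le_of_deriv_right_lt_deriv_boundary hg hg' (by linarith)
      (fun s => (((hasDerivAt_id' s).sub_const a).const_add 1).const_mul ε)
      (fun s hs hgs => by
        have hpos : 0 < g s := hgs ▸ mul_pos hε (by linarith [hs.1])
        simpa using (hbound s hs hpos).trans_lt hε) ht
  have hc : 0 < 1 + (t - a) := by linarith [ht.1]
  refine le_of_forall_pos_le_add fun δ hδ => ?_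
  simpa [div_mul_cancel₀ δ hc.ne'] using hfence (δ / (1 + (t - a))) (div_pos hδ hc)

theorem sublevel_forward_invariant_general {n : ℕ}
    (X : Set (EuclideanSpace ℝ (Fin n)))
    (f : EuclideanSpace ℝ (Fin n) → EuclideanSpace ℝ (Fin n))
    (B : EuclideanSpace ℝ (Fin n) → ℝ) (hB : ContDiff ℝ 1 B)
    (β : ℝ → ℝ) (hβ : ExtendedClassK β)
    (hdecr : ∀ x ∈ X, ⟪gradient B x, f x⟫ ≤ -β (B x)) :
    ∀ x : ℝ → EuclideanSpace ℝ (Fin n),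
      (∀ t : ℝ, 0 ≤ t → HasDerivAt x (f (x t)) t) →
      (∀ t : ℝ, 0 ≤ t → x t ∈ X) →
      B (x 0) ≤ 0 →
      ∀ t : ℝ, 0 ≤ t → B (x t) ≤ 0 := by
  intro x hx hxX h0 t ht
  have hderiv : ∀ s, 0 ≤ s → HasDerivAt (B ∘ x) ⟪gradient B (x s), f (x s)⟫ s := fun s hs =>
    (hB.differentiable one_ne_zero (x s)).hasGradientAt.comp_hasDerivAt (hx s hs)
  exact image_nonpos_of_deriv_right_nonpos_of_pos
    (fun s hs => (hderiv s hs.1).continuousAt.continuousWithinAt)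
    (fun s hs => (hderiv s hs.1).hasDerivWithinAt) h0
    (fun s hs hpos => (hdecr (x s) (hxX s hs.1)).trans (neg_nonpos.mpr (hβ.pos hpos).le))
    ⟨ht, le_rfl⟩

/-- **Forward invariance of the zero sublevel set.** If `⟪∇B x, f x⟫ ≤ -β (B x)` on `X`
for an extended class-K function `β`, then along every trajectory of `ẋ = f(x)` that
remains in `X`, `B(x 0) ≤ 0` implies `B(x t) ≤ 0` for all `t ≥ 0`. -/
theorem sublevel_forward_invariant {n : ℕ}
    (X : Set (EuclideanSpace ℝ (Fin n)))
    (f : EuclideanSpace ℝ (Fin n) → EuclideanSpace ℝ (Fin n))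
    (hf : Continuous f)
    (B : EuclideanSpace ℝ (Fin n) → ℝ) (hB : ContDiff ℝ 1 B)
    (β : ℝ → ℝ) (hβ : ExtendedClassK β)
    (hdecr : ∀ x ∈ X, ⟪gradient B x, f x⟫ ≤ -β (B x)) :
    ∀ x : ℝ → EuclideanSpace ℝ (Fin n),
      (∀ t : ℝ, 0 ≤ t → HasDerivAt x (f (x t)) t) →
      (∀ t : ℝ, 0 ≤ t → x t ∈ X) →
      B (x 0) ≤ 0 →
      ∀ t : ℝ, 0 ≤ t → B (x t) ≤ 0 :=
  sublevel_forward_invariant_general X f B hB β hβ hdecr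
end

section
/- Let β : ℝ → ℝ be strictly increasing with β(0) = 0, and let h : [0,∞) → ℝ be differentiable with h'(t) ≤ −β(h(t)) for all t ≥ 0. Then for every ε > 0 there exists T ≥ 0 such that h(t) ≤ ε for all t ≥ T. -/
/-!
Above the level `ε` the derivative of `h` is at most `-β ε < 0`, so `h` decreases at a uniform
linear rate until it reaches `ε`; once `h t ≤ ε`, the strict decrease at the level `ε` itself
prevents `h` from ever crossing it again.
-/

open Set

theorem exists_le_of_deriv_le_neg_above {f f' : ℝ → ℝ} {a c ε : ℝ} (hc : 0 < c)
    (hf : ∀ t, a ≤ t → HasDerivAt f (f' t) t) (hdecay : ∀ t, a ≤ t → ε < f t → f' t ≤ -c) :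
    ∃ t, a ≤ t ∧ f t ≤ ε := by
  by_contra! habove
  set t := a + (f a - ε) / c
  have hat : a ≤ t := le_add_of_nonneg_right (div_nonneg (sub_nonneg.2 (habove a le_rfl).le) hc.le)
  have hlinear : f t - f a ≤ -c * (t - a) := by
    refine (convex_Ici a).image_sub_le_mul_sub_of_deriv_le
      (fun x hx => (hf x hx).continuousAt.continuousWithinAt)
      (fun x hx => (hf x (interior_subset hx)).differentiableAt.differentiableWithinAt)
      (fun x hx => ?_) a self_mem_Ici t hat hat
    rw [interior_Ici] at hx
    rw [(hf x hx.le).deriv]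
    exact hdecay x hx.le (habove x hx.le)
  have hdrop : c * (t - a) = f a - ε := by
    simp only [t, add_sub_cancel_left, mul_div_cancel₀ _ hc.ne']
  linarith [habove t hat]

theorem le_of_le_of_deriv_neg_at_level {f f' : ℝ → ℝ} {a ε : ℝ}
    (hf : ∀ t, a ≤ t → HasDerivAt f (f' t) t) (hlevel : ∀ t, a ≤ t → f t = ε → f' t < 0)
    (ha : f a ≤ ε) {t : ℝ} (ht : a ≤ t) : f t ≤ ε :=
  image_le_of_deriv_right_lt_deriv_boundary (B := fun _ => ε) (B' := 0)
    (fun x hx => (hf x hx.1).continuousAt.continuousWithinAt)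
    (fun x hx => (hf x hx.1).hasDerivWithinAt) ha (fun _ => hasDerivAt_const _ _)
    (fun x hx => hlevel x hx.1) ⟨ht, le_rfl⟩

/-- **Attractivity.** If `β : ℝ → ℝ` is strictly increasing with `β 0 = 0` and
`h : [0,∞) → ℝ` is differentiable with `h'(t) ≤ -β (h t)` for all `t ≥ 0`, then for
every `ε > 0` there exists `T ≥ 0` with `h t ≤ ε` for all `t ≥ T`. -/
theorem eventually_below_every_positive_level
    (β : ℝ → ℝ) (hβ : StrictMono β) (hβ0 : β 0 = 0)
    (h h' : ℝ → ℝ)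
    (hderiv : ∀ t : ℝ, 0 ≤ t → HasDerivAt h (h' t) t)
    (hineq : ∀ t : ℝ, 0 ≤ t → h' t ≤ -β (h t)) :
    ∀ ε : ℝ, 0 < ε → ∃ T : ℝ, 0 ≤ T ∧ ∀ t : ℝ, T ≤ t → h t ≤ ε := by
  intro ε hε
  have hβε : 0 < β ε := hβ0 ▸ hβ hε
  have hdecay : ∀ t, 0 ≤ t → ε ≤ h t → h' t ≤ -β ε := fun t ht hεt =>
    (hineq t ht).trans (neg_le_neg (hβ.monotone hεt))
  obtain ⟨T, hT, hhT⟩ :=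
    exists_le_of_deriv_le_neg_above hβε hderiv fun t ht hεt => hdecay t ht hεt.le
  refine ⟨T, hT, fun t hTt => le_of_le_of_deriv_neg_at_level (fun s hs => hderiv s (hT.trans hs))
    (fun s hs hsε => ?_) hhT hTt⟩
  linarith [hdecay s (hT.trans hs) hsε.ge]
end

section
/- Let β : ℝ → ℝ be strictly increasing with β(0) = 0, let ε > 0, and let h : [0,∞) → ℝ be differentiable with h'(t) ≤ −β(h(t)) for all t ≥ 0 and h(0) > ε. Then there exists T with 0 ≤ T ≤ h(0)/β(ε) such that h(T) ≤ ε. -/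
/-!
As long as `h` stays above `ε`, monotonicity of `β` gives `h' ≤ -β ε < 0`, so by the mean value
inequality `h` falls at least linearly with slope `β ε`. Staying above `ε` up to time
`(h 0 - ε) / β ε` would therefore force `h ≤ ε` there.
-/

open Set

theorem exists_le_of_hasDerivAt_le_neg {f f' : ℝ → ℝ} {c ε : ℝ} (hc : 0 < c)
    (hf : ∀ t, 0 ≤ t → HasDerivAt f (f' t) t) (hf' : ∀ t, 0 ≤ t → ε < f t → f' t ≤ -c)
    (hε : ε ≤ f 0) :
    ∃ T, 0 ≤ T ∧ T ≤ (f 0 - ε) / c ∧ f T ≤ ε := by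
  set T := (f 0 - ε) / c
  have hT : 0 ≤ T := div_nonneg (sub_nonneg.2 hε) hc.le
  by_contra! hcontra
  have habove : ∀ t ∈ Icc 0 T, ε < f t := fun t ht => hcontra t ht.1 ht.2
  have hderiv : ∀ t ∈ Icc 0 T, HasDerivAt f (f' t) t := fun t ht => hf t ht.1
  have hdrop : f T - f 0 ≤ -c * (T - 0) := by
    refine (convex_Icc 0 T).image_sub_le_mul_sub_of_deriv_le
      (fun t ht => (hderiv t ht).continuousAt.continuousWithinAt)
      (fun t ht => (hderiv t (interior_subset ht)).differentiableAt.differentiableWithinAt)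
      (fun t ht => ?_) 0 (left_mem_Icc.2 hT) T (right_mem_Icc.2 hT) hT
    have ht' := interior_subset ht
    rw [(hderiv t ht').deriv]
    exact hf' t ht'.1 (habove t ht')
  have hcT : c * T = f 0 - ε := mul_div_cancel₀ _ hc.ne'
  linarith [habove T (right_mem_Icc.2 hT)]

/-- **Hitting-time bound.** If `β : ℝ → ℝ` is strictly increasing with `β 0 = 0`,
`ε > 0`, and `h : [0,∞) → ℝ` is differentiable with `h'(t) ≤ -β (h t)` for all
`t ≥ 0` and `h 0 > ε`, then `h` drops to level `ε` within time `h 0 / β ε`. -/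
theorem hitting_time_bound
    (β : ℝ → ℝ) (hβ : StrictMono β) (hβ0 : β 0 = 0)
    (ε : ℝ) (hε : 0 < ε)
    (h h' : ℝ → ℝ)
    (hderiv : ∀ t : ℝ, 0 ≤ t → HasDerivAt h (h' t) t)
    (hineq : ∀ t : ℝ, 0 ≤ t → h' t ≤ -β (h t))
    (h0 : ε < h 0) :
    ∃ T : ℝ, 0 ≤ T ∧ T ≤ h 0 / β ε ∧ h T ≤ ε := by
  have hβε : 0 < β ε := hβ0 ▸ hβ hε
  obtain ⟨T, hT0, hT, hTε⟩ := exists_le_of_hasDerivAt_le_neg hβε hderiv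
    (fun t ht hεt => (hineq t ht).trans (neg_le_neg (hβ hεt).le)) h0.le
  refine ⟨T, hT0, hT.trans ?_, hTε⟩
  gcongr
  linarith
end
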